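/- (Commute time identity) For lazy simple random walk on a finite connected graph G = (V,E) with unit resistance on each edge, for any two vertices x, y: E_y(τ_x) + E_x(τ_y) = 4·|E|·R(x ↔ y), where R(x ↔ y) is the effective resistance between x and y. -/

import Mathlib

/-- Dirichlet energy of `f` on a graph with unit conductance on each edge. -/
noncomputable def dirichletEnergy {V : Type*} [Fintype V]
    (G : SimpleGraph V) [DecidableRel G.Adj] (f : V → ℝ) : ℝ :=
  (1 / 2) * ∑ u, ∑ v, if G.Adj u v then (f u - f v) ^ 2 else 0

/-- Effective resistance between `x` and `y` in the unit-conductance network on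
`G`, defined via the Dirichlet variational principle. -/
noncomputable def effRes {V : Type*} [Fintype V]
    (G : SimpleGraph V) [DecidableRel G.Adj] (x y : V) : ℝ :=
  (sInf (dirichletEnergy G '' {f : V → ℝ | f x = 1 ∧ f y = 0}))⁻¹

/-- The transition matrix of the lazy simple random walk on a graph. -/
noncomputable def lazyWalkMatrix {V : Type*} [Fintype V] [DecidableEq V]
    (G : SimpleGraph V) [DecidableRel G.Adj] : Matrix V V ℝ :=
  Matrix.of fun x y =>
    if x = y then 1 / 2 else if G.Adj x y then 1 / (2 * (G.degree x : ℝ)) else 0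

section Aux

open Finset

variable {V : Type*} [Fintype V] (G : SimpleGraph V) [DecidableRel G.Adj]

/-- The graph Laplacian-style operator: `lapl G f v = ∑_{u ~ v} (f u - f v)`. -/
noncomputable def lapl (f : V → ℝ) (v : V) : ℝ :=
  ∑ u, if G.Adj v u then (f u - f v) else 0

/-- Bilinear Dirichlet form. -/
noncomputable def Bform (f g : V → ℝ) : ℝ :=
  ∑ u, ∑ v, if G.Adj u v then (f u - f v) * (g u - g v) else 0

lemma sum_ite_adj_const (v : V) (c : ℝ) :
    (∑ z, if G.Adj v z then c else 0) = (G.degree v : ℝ) * c := by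
  rw [← Finset.sum_filter, Finset.sum_const, ← SimpleGraph.neighborFinset_eq_filter,
    ← SimpleGraph.card_neighborFinset_eq_degree]
  simp [nsmul_eq_mul]

lemma lapl_eq (f : V → ℝ) (v : V) :
    lapl G f v = (∑ z, if G.Adj v z then f z else 0) - (G.degree v : ℝ) * f v := by
  rw [lapl, ← sum_ite_adj_const G v (f v), ← Finset.sum_sub_distrib]
  apply Finset.sum_congr rfl
  intro z _
  split <;> simp

lemma Bform_eq_sum_lapl (f g : V → ℝ) :
    Bform G f g = -2 * ∑ v, g v * lapl G f v := by
  have key : ∀ u v : V, (if G.Adj u v then (f u - f v) * (g u - g v) else 0)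
      = (if G.Adj u v then (f u - f v) * g u else 0)
        - (if G.Adj u v then (f u - f v) * g v else 0) := by
    intro u v; split <;> ring
  have h1 : Bform G f g
      = (∑ u, ∑ v, if G.Adj u v then (f u - f v) * g u else 0)
        - (∑ u, ∑ v, if G.Adj u v then (f u - f v) * g v else 0) := by
    rw [Bform, ← Finset.sum_sub_distrib]
    refine Finset.sum_congr rfl fun u _ => ?_
    rw [← Finset.sum_sub_distrib]
    exact Finset.sum_congr rfl fun v _ => key u v
  have h2 : (∑ u, ∑ v, if G.Adj u v then (f u - f v) * g u else 0)
      = - ∑ u, g u * lapl G f u := by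
    rw [← Finset.sum_neg_distrib]
    refine Finset.sum_congr rfl fun u _ => ?_
    rw [lapl, Finset.mul_sum, ← Finset.sum_neg_distrib]
    refine Finset.sum_congr rfl fun v _ => ?_
    split <;> ring
  have h3 : (∑ u, ∑ v, if G.Adj u v then (f u - f v) * g v else 0)
      = ∑ v, g v * lapl G f v := by
    rw [Finset.sum_comm]
    refine Finset.sum_congr rfl fun v _ => ?_
    rw [lapl, Finset.mul_sum]
    refine Finset.sum_congr rfl fun u _ => ?_
    by_cases hadj : G.Adj u v
    · rw [if_pos hadj, if_pos hadj.symm]; ring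
    · rw [if_neg hadj, if_neg fun hc => hadj hc.symm]; ring
  rw [h1, h2, h3]; ring

lemma Bform_comm (f g : V → ℝ) : Bform G f g = Bform G g f := by
  refine Finset.sum_congr rfl fun u _ => Finset.sum_congr rfl fun v _ => ?_
  split <;> ring

lemma Bform_nonneg (f : V → ℝ) : 0 ≤ Bform G f f := by
  refine Finset.sum_nonneg fun u _ => Finset.sum_nonneg fun v _ => ?_
  split
  · exact mul_self_nonneg _
  · exact le_refl 0

lemma dirichletEnergy_eq (f : V → ℝ) :
    dirichletEnergy G f = (1 / 2) * Bform G f f := by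
  rw [dirichletEnergy, Bform]
  congr 1
  refine Finset.sum_congr rfl fun u _ => Finset.sum_congr rfl fun v _ => ?_
  split <;> ring

lemma Bform_scale (c : ℝ) (f g w : V → ℝ)
    (hfg : ∀ u v : V, f u - f v = c * (g u - g v)) :
    Bform G f w = c * Bform G g w := by
  rw [Bform, Bform, Finset.mul_sum]
  refine Finset.sum_congr rfl fun u _ => ?_
  rw [Finset.mul_sum]
  refine Finset.sum_congr rfl fun v _ => ?_
  rw [hfg u v]
  split <;> ring

lemma Bform_add_expand (f w : V → ℝ) :
    Bform G (f + w) (f + w) = Bform G f f + 2 * Bform G f w + Bform G w w := by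
  have key : ∀ u v : V,
      (if G.Adj u v then ((f + w) u - (f + w) v) * ((f + w) u - (f + w) v) else 0)
      = (if G.Adj u v then (f u - f v) * (f u - f v) else 0)
        + 2 * (if G.Adj u v then (f u - f v) * (w u - w v) else 0)
        + (if G.Adj u v then (w u - w v) * (w u - w v) else 0) := by
    intro u v; simp only [Pi.add_apply]; split <;> ring
  rw [Bform, Bform, Bform, Bform]
  rw [Finset.mul_sum, ← Finset.sum_add_distrib, ← Finset.sum_add_distrib]
  refine Finset.sum_congr rfl fun u _ => ?_
  rw [Finset.mul_sum, ← Finset.sum_add_distrib, ← Finset.sum_add_distrib]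
  exact Finset.sum_congr rfl fun v _ => key u v

lemma sum_lapl (f : V → ℝ) : ∑ v, lapl G f v = 0 := by
  have h2 : (∑ v, lapl G f v) + (∑ v, lapl G f v) = 0 := by
    nth_rewrite 2 [show (∑ v, lapl G f v) = ∑ u, ∑ v, if G.Adj u v then (f v - f u) else 0
      from Finset.sum_congr rfl fun u _ => rfl]
    rw [Finset.sum_comm]
    rw [show (∑ v, lapl G f v) = ∑ v, ∑ u, if G.Adj v u then (f u - f v) else 0
      from Finset.sum_congr rfl fun u _ => rfl]
    rw [← Finset.sum_add_distrib]
    refine Finset.sum_eq_zero fun v _ => ?_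
    rw [← Finset.sum_add_distrib]
    refine Finset.sum_eq_zero fun u _ => ?_
    by_cases hadj : G.Adj v u
    · rw [if_pos hadj, if_pos hadj.symm]; ring
    · rw [if_neg hadj, if_neg fun hc => hadj hc.symm]; ring
  linarith

end Aux

/-- Commute time identity: for the lazy simple random walk on a finite connected
graph with unit resistance on each edge, `E_y(τ_x) + E_x(τ_y) = 4|E|·R(x ↔ y)`.
Here `h x y = E_y(τ_x)` denotes the expected hitting times of the lazy walk,
characterized by the usual hitting time system. -/
theorem lazy_commute_time_identity
    {V : Type*} [Fintype V] [DecidableEq V] [Nonempty V]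
    (G : SimpleGraph V) [DecidableRel G.Adj]
    (hconn : G.Connected) (hdeg : ∀ v, 0 < G.degree v)
    (h : V → V → ℝ)
    (hxx : ∀ x, h x x = 0)
    (hrec : ∀ x y, y ≠ x → h x y = 1 + ∑ z, lazyWalkMatrix G y z * h x z) :
    ∀ x y : V, h x y + h y x = 4 * (G.edgeFinset.card : ℝ) * effRes G x y := by
  classical
  set m : ℝ := (G.edgeFinset.card : ℝ) with hm
  -- degree sum
  have hdegsum : (∑ v, (G.degree v : ℝ)) = 2 * m := by
    rw [hm]
    norm_cast
    exact_mod_cast G.sum_degrees_eq_twice_card_edges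
  intro x y
  by_cases hxy : x = y
  · subst hxy
    have hset : ({f : V → ℝ | f x = 1 ∧ f x = 0} : Set (V → ℝ)) = ∅ := by
      ext f; simp only [Set.mem_setOf_eq, Set.mem_empty_iff_false, iff_false]
      rintro ⟨h1, h0⟩; rw [h1] at h0; norm_num at h0
    rw [effRes, hset]
    simp [hxx, Real.sInf_empty]
  -- main case x ≠ y
  have hm0 : 0 < m := by
    have h1 : (G.degree x : ℝ) ≤ ∑ v, (G.degree v : ℝ) :=
      Finset.single_le_sum (f := fun v => (G.degree v : ℝ)) (fun v _ => by positivity)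
        (Finset.mem_univ x)
    have h2 : (0:ℝ) < (G.degree x : ℝ) := by exact_mod_cast hdeg x
    linarith [hdegsum ▸ h1]
  -- Step 1: lapl of hitting time functions away from source
  have hlap : ∀ a v : V, v ≠ a → lapl G (h a) v = -2 * (G.degree v : ℝ) := by
    intro a v hva
    set d : ℝ := (G.degree v : ℝ) with hd
    have hd0 : 0 < d := by rw [hd]; exact_mod_cast hdeg v
    have hz : ∀ z : V, lazyWalkMatrix G v z * h a z
        = (if v = z then (1/2) * h a z else 0)
          + (if G.Adj v z then (1/(2*d)) * h a z else 0) := by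
      intro z
      simp only [lazyWalkMatrix, Matrix.of_apply]
      by_cases h1 : v = z
      · subst h1; simp [G.irrefl]
      · simp only [h1, if_false]
        by_cases h2 : G.Adj v z <;> simp [h2, hd]
    have hsum : (∑ z, lazyWalkMatrix G v z * h a z)
        = (1/2) * h a v + (1/(2*d)) * ∑ z, (if G.Adj v z then h a z else 0) := by
      rw [Finset.sum_congr rfl fun z _ => hz z, Finset.sum_add_distrib]
      congr 1
      · simp
      · rw [Finset.mul_sum]
        refine Finset.sum_congr rfl fun z _ => ?_
        split <;> ring
    have heq := hrec a v hva
    rw [hsum] at heq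
    rw [lapl_eq]
    rw [← hd]
    set S : ℝ := ∑ z, (if G.Adj v z then h a z else 0)
    have hd' : d ≠ 0 := ne_of_gt hd0
    field_simp at heq
    nlinarith [heq]
  -- Step 2: lapl at the source
  have hlapself : ∀ a : V, lapl G (h a) a = 4 * m - 2 * (G.degree a : ℝ) := by
    intro a
    have h0 := sum_lapl G (h a)
    rw [← Finset.add_sum_erase _ _ (Finset.mem_univ a)] at h0
    have h1 : ∑ v ∈ Finset.univ.erase a, lapl G (h a) v
        = ∑ v ∈ Finset.univ.erase a, (-2 * (G.degree v : ℝ)) := by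
      refine Finset.sum_congr rfl fun v hv => hlap a v (Finset.mem_erase.mp hv).1
    have h2 : ∑ v ∈ Finset.univ.erase a, (-2 * (G.degree v : ℝ))
        = -2 * (2 * m - (G.degree a : ℝ)) := by
      rw [← Finset.mul_sum, Finset.sum_erase_eq_sub (Finset.mem_univ a), hdegsum]
    rw [h1, h2] at h0
    linarith
  -- φ and C
  set φ : V → ℝ := fun v => h x v - h y v with hφ
  set C : ℝ := h x y + h y x with hC
  have hφx : φ x = - h y x := by simp [hφ, hxx]
  have hφy : φ y = h x y := by simp [hφ, hxx]
  have hCdiff : φ y - φ x = C := by rw [hφx, hφy, hC]; ring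
  -- lapl of φ
  have hlapφ : ∀ v : V, lapl G φ v
      = (if v = x then 4*m else 0) + (if v = y then -(4*m) else 0) := by
    intro v
    have hsplit : lapl G φ v = lapl G (h x) v - lapl G (h y) v := by
      rw [lapl, lapl, lapl, ← Finset.sum_sub_distrib]
      refine Finset.sum_congr rfl fun u _ => ?_
      simp only [hφ]; split <;> ring
    by_cases hvx : v = x
    · rw [hsplit, hvx, hlapself x, hlap y x hxy, if_pos rfl, if_neg hxy]
      ring
    · by_cases hvy : v = y
      · rw [hsplit, hvy, hlap x y (Ne.symm hxy), hlapself y,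
          if_neg (Ne.symm hxy), if_pos rfl]
        ring
      · rw [hsplit, hlap x v hvx, hlap y v hvy, if_neg hvx, if_neg hvy]
        ring
  -- weighted sums against lapl φ
  have hsumφ : ∀ g : V → ℝ, (∑ v, g v * lapl G φ v) = 4 * m * (g x - g y) := by
    intro g
    have : ∀ v : V, g v * lapl G φ v
        = (if v = x then g v * (4*m) else 0) + (if v = y then g v * (-(4*m)) else 0) := by
      intro v
      rw [hlapφ v]
      rcases eq_or_ne v x with rfl | hvx
      · rw [if_pos rfl, if_pos rfl, if_neg hxy, if_neg hxy]
        ring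
      · rcases eq_or_ne v y with rfl | hvy
        · rw [if_neg hvx, if_neg hvx, if_pos rfl, if_pos rfl]
          ring
        · rw [if_neg hvx, if_neg hvx, if_neg hvy, if_neg hvy]
          ring
    rw [Finset.sum_congr rfl fun v _ => this v, Finset.sum_add_distrib]
    rw [Finset.sum_ite_eq' Finset.univ x (fun v => g v * (4*m)),
        Finset.sum_ite_eq' Finset.univ y (fun v => g v * (-(4*m)))]
    simp
    ring
  have hBφ : ∀ g : V → ℝ, Bform G φ g = 8 * m * (g y - g x) := by
    intro g
    rw [Bform_eq_sum_lapl, hsumφ g]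
    ring
  -- energy of φ and positivity of C
  have hBφφ : Bform G φ φ = 8 * m * C := by rw [hBφ φ, hCdiff]
  have hCnonneg : 0 ≤ C := by
    have hnn := Bform_nonneg G φ
    rw [hBφφ] at hnn
    nlinarith
  have hCpos : 0 < C := by
    rcases hCnonneg.lt_or_eq with h1 | h1
    · exact h1
    · exfalso
      have hzero : Bform G φ φ = 0 := by rw [hBφφ, ← h1]; ring
      have hterm : ∀ u v : V, G.Adj u v → φ u = φ v := by
        intro u v huv
        have h2 : ∀ u ∈ Finset.univ, (0:ℝ) ≤ ∑ v, if G.Adj u v then (φ u - φ v) * (φ u - φ v) else 0 := by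
          intro u _
          refine Finset.sum_nonneg fun v _ => ?_
          split
          · exact mul_self_nonneg _
          · exact le_refl 0
        have h3 := (Finset.sum_eq_zero_iff_of_nonneg h2).mp hzero u (Finset.mem_univ u)
        have h4 : ∀ v ∈ Finset.univ, (0:ℝ) ≤ if G.Adj u v then (φ u - φ v) * (φ u - φ v) else 0 := by
          intro v _
          split
          · exact mul_self_nonneg _
          · exact le_refl 0
        have h5 := (Finset.sum_eq_zero_iff_of_nonneg h4).mp h3 v (Finset.mem_univ v)
        rw [if_pos huv] at h5
        have := mul_self_eq_zero.mp h5
        linarith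
      have hlx : lapl G φ x = 0 := by
        rw [lapl]
        refine Finset.sum_eq_zero fun u _ => ?_
        split
        · rename_i ha
          rw [hterm x u ha]; ring
        · rfl
      rw [hlapφ x, if_pos rfl, if_neg hxy] at hlx
      have h4m : (0:ℝ) < 4 * m := by positivity
      simp only [add_zero] at hlx
      linarith
  have hC0 : C ≠ 0 := ne_of_gt hCpos
  -- the minimizer
  set f : V → ℝ := fun v => (φ y - φ v) / C with hf
  have hfx : f x = 1 := by
    simp only [hf]
    rw [show φ y - φ x = C from hCdiff]
    field_simp
  have hfy : f y = 0 := by simp [hf]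
  have hfscale : ∀ u v : V, f u - f v = (-(1/C)) * (φ u - φ v) := by
    intro u v
    simp only [hf]
    field_simp
    ring
  have hBff : Bform G f f = 8 * m / C := by
    rw [Bform_scale G (-(1/C)) f φ f hfscale, Bform_comm,
        Bform_scale G (-(1/C)) f φ φ hfscale, hBφφ]
    field_simp
  have hDf : dirichletEnergy G f = 4 * m / C := by
    rw [dirichletEnergy_eq, hBff]; ring
  -- lower bound for all competitors
  have hlower : ∀ g : V → ℝ, g x = 1 → g y = 0 →
      4 * m / C ≤ dirichletEnergy G g := by
    intro g hgx hgy
    set w : V → ℝ := g - f with hw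
    have hgfw : g = f + w := by
      funext v; simp [hw]
    have hwx : w x = 0 := by simp [hw, hgx, hfx]
    have hwy : w y = 0 := by simp [hw, hgy, hfy]
    have hBfw : Bform G f w = 0 := by
      rw [Bform_scale G (-(1/C)) f φ w hfscale, hBφ w, hwx, hwy]
      ring
    have hexp : Bform G g g = Bform G f f + Bform G w w := by
      rw [hgfw, Bform_add_expand, hBfw]; ring
    have hwnn := Bform_nonneg G w
    rw [dirichletEnergy_eq, hexp, hBff]
    have h8 : (8:ℝ) * m / C = 2 * (4 * m / C) := by ring
    linarith
  -- compute the infimum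
  have hfmem : dirichletEnergy G f ∈ dirichletEnergy G '' {f : V → ℝ | f x = 1 ∧ f y = 0} :=
    ⟨f, ⟨hfx, hfy⟩, rfl⟩
  have hbdd : ∀ r ∈ dirichletEnergy G '' {f : V → ℝ | f x = 1 ∧ f y = 0},
      4 * m / C ≤ r := by
    rintro r ⟨g, ⟨hgx, hgy⟩, rfl⟩
    exact hlower g hgx hgy
  have hinf : sInf (dirichletEnergy G '' {f : V → ℝ | f x = 1 ∧ f y = 0}) = 4 * m / C := by
    apply le_antisymm
    · exact csInf_le ⟨_, hbdd⟩ (hDf ▸ hfmem)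
    · exact le_csInf ⟨_, hfmem⟩ hbdd
  rw [effRes, hinf, inv_div]
  have h4m : (4:ℝ) * m ≠ 0 := by positivity
  rw [mul_comm (4 * m) (C / (4 * m)), div_mul_cancel₀ C h4m]
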